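/- arXiv:1510.05620 — 4 statements merged into one kernel-verified Lean document; each statement's English description precedes it below -/
import Mathlib

section
/- Let Φ : ℝ₊ → ℝ₊ be locally integrable and g : ℝ₊ → ℝ₊ be locally bounded. If u : ℝ₊ → ℝ₊ is locally bounded and satisfies u(t) ≤ g(t) + ∫₀ᵗ Φ(t−s) u(s) ds for all t ≥ 0, then for every T > 0 there exists a constant C_T (depending only on T and Φ, and which may be chosen nondecreasing in T) such that sup_{t∈[0,T]} u(t) ≤ C_T · sup_{t∈[0,T]} g(t). -/
/-!
Weight by `e^{-λ s}`. Once `λ` is so large that `∫₀ᵀ e^{-λτ} Φ(τ) dτ ≤ 1/2`, the convolution term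
in the inequality for `v(s) = e^{-λ s} u(s)` is at most half of `sup_{[0,T]} v`, so
`sup_{[0,T]} v ≤ 2 sup_{[0,T]} g` and `u ≤ 2 e^{λT} sup_{[0,T]} g` on `[0,T]`. The set of admissible
`λ` depends only on `Φ` and `T` and shrinks as `T` grows, so a rate read off from its infimum is
nondecreasing in `T`.
-/

open MeasureTheory Set Filter Topology Real

theorem integral_Ioc_comp_sub_left (f : ℝ → ℝ) {t : ℝ} (ht : 0 ≤ t) :
    ∫ s in Ioc 0 t, f (t - s) = ∫ s in Ioc 0 t, f s := by
  rw [← intervalIntegral.integral_of_le ht, ← intervalIntegral.integral_of_le ht,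
    intervalIntegral.integral_comp_sub_left, sub_self, sub_zero]

theorem integrableOn_Ioc_comp_sub_left {f : ℝ → ℝ} {t : ℝ} (ht : 0 ≤ t)
    (hf : IntegrableOn f (Ioc 0 t)) : IntegrableOn (fun s => f (t - s)) (Ioc 0 t) := by
  rw [← intervalIntegrable_iff_integrableOn_Ioc_of_le ht] at hf ⊢
  simpa using (hf.comp_sub_left t).symm

noncomputable def dampedMass (Φ : ℝ → ℝ) (l T : ℝ) : ℝ :=
  ∫ τ in Ioc 0 T, exp (-l * τ) * Φ τ

section dampedMass

variable {Φ : ℝ → ℝ}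

theorem integrableOn_exp_mul_Ioc (hΦ : LocallyIntegrableOn Φ (Ici 0)) (l T : ℝ) :
    IntegrableOn (fun τ => exp (-l * τ) * Φ τ) (Ioc 0 T) :=
  ((hΦ.integrableOn_compact_subset Icc_subset_Ici_self isCompact_Icc).continuousOn_mul
    (by fun_prop) isCompact_Icc).mono_set Ioc_subset_Icc_self

theorem monotone_dampedMass (hΦnn : ∀ t ≥ 0, 0 ≤ Φ t) (hΦ : LocallyIntegrableOn Φ (Ici 0))
    (l : ℝ) : Monotone (dampedMass Φ l) := fun _ T₂ hT =>
  setIntegral_mono_set (integrableOn_exp_mul_Ioc hΦ l T₂)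
    (ae_restrict_of_forall_mem measurableSet_Ioc fun τ hτ =>
      mul_nonneg (exp_pos _).le (hΦnn τ hτ.1.le))
    (Ioc_subset_Ioc_right hT).eventuallyLE

theorem antitone_dampedMass (hΦnn : ∀ t ≥ 0, 0 ≤ Φ t) (hΦ : LocallyIntegrableOn Φ (Ici 0))
    (T : ℝ) : Antitone fun l => dampedMass Φ l T := fun l₁ l₂ hl =>
  setIntegral_mono_on (integrableOn_exp_mul_Ioc hΦ l₂ T) (integrableOn_exp_mul_Ioc hΦ l₁ T)
    measurableSet_Ioc fun τ hτ =>
      mul_le_mul_of_nonneg_right (exp_le_exp.2 (by nlinarith [hτ.1])) (hΦnn τ hτ.1.le)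

theorem tendsto_dampedMass_atTop (hΦnn : ∀ t ≥ 0, 0 ≤ Φ t)
    (hΦ : LocallyIntegrableOn Φ (Ici 0)) (T : ℝ) :
    Tendsto (fun l => dampedMass Φ l T) atTop (𝓝 0) := by
  have hΦT : IntegrableOn Φ (Ioc 0 T) := by simpa using integrableOn_exp_mul_Ioc hΦ 0 T
  have h := tendsto_integral_filter_of_dominated_convergence (μ := volume.restrict (Ioc 0 T))
    (F := fun l τ => exp (-l * τ) * Φ τ) (f := fun _ => 0) Φ
    (Eventually.of_forall fun l => (integrableOn_exp_mul_Ioc hΦ l T).aestronglyMeasurable)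
    ((eventually_ge_atTop 0).mono fun l hl =>
      ae_restrict_of_forall_mem measurableSet_Ioc fun τ hτ => by
        have hΦτ := hΦnn τ hτ.1.le
        rw [norm_of_nonneg (by positivity)]
        exact mul_le_of_le_one_left hΦτ (exp_le_one_iff.2 (by nlinarith [hτ.1])))
    hΦT
    (ae_restrict_of_forall_mem measurableSet_Ioc fun τ hτ => by
      have hexp : Tendsto (fun l : ℝ => exp (-l * τ)) atTop (𝓝 0) := by
        simp only [neg_mul]
        exact tendsto_exp_atBot.comp
          (tendsto_neg_atTop_atBot.comp (tendsto_id.atTop_mul_const hτ.1))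
      simpa using hexp.mul_const (Φ τ))
  simpa [dampedMass] using h

end dampedMass

def admissibleRates (Φ : ℝ → ℝ) (T : ℝ) : Set ℝ :=
  {l | 0 ≤ l ∧ dampedMass Φ l T ≤ 1 / 2}

-- The `+ 1` puts the rate strictly above the infimum, hence inside the upward closed set of
-- admissible rates, without a continuity argument in `l`.
noncomputable def gronwallRate (Φ : ℝ → ℝ) (T : ℝ) : ℝ :=
  sInf (admissibleRates Φ T) + 1

section gronwallRate

variable {Φ : ℝ → ℝ}

theorem admissibleRates_nonempty (hΦnn : ∀ t ≥ 0, 0 ≤ Φ t)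
    (hΦ : LocallyIntegrableOn Φ (Ici 0)) (T : ℝ) : (admissibleRates Φ T).Nonempty := by
  obtain ⟨l, hmass, hl⟩ := (((tendsto_dampedMass_atTop hΦnn hΦ T).eventually_le_const
    (by norm_num : (0 : ℝ) < 1 / 2)).and (eventually_ge_atTop 0)).exists
  exact ⟨l, hl, hmass⟩

theorem antitone_admissibleRates (hΦnn : ∀ t ≥ 0, 0 ≤ Φ t)
    (hΦ : LocallyIntegrableOn Φ (Ici 0)) : Antitone (admissibleRates Φ) :=
  fun _ _ hT l ⟨hl, hmass⟩ =>
  ⟨hl, (monotone_dampedMass hΦnn hΦ l hT).trans hmass⟩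

theorem gronwallRate_nonneg (hΦnn : ∀ t ≥ 0, 0 ≤ Φ t) (hΦ : LocallyIntegrableOn Φ (Ici 0))
    (T : ℝ) : 0 ≤ gronwallRate Φ T := by
  have : 0 ≤ sInf (admissibleRates Φ T) :=
    le_csInf (admissibleRates_nonempty hΦnn hΦ T) fun _ hl => hl.1
  unfold gronwallRate
  positivity

theorem dampedMass_gronwallRate_le (hΦnn : ∀ t ≥ 0, 0 ≤ Φ t)
    (hΦ : LocallyIntegrableOn Φ (Ici 0)) (T : ℝ) : dampedMass Φ (gronwallRate Φ T) T ≤ 1 / 2 := by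
  obtain ⟨l, ⟨_, hmass⟩, hlt⟩ :=
    exists_lt_of_csInf_lt (admissibleRates_nonempty hΦnn hΦ T) (lt_add_one _)
  exact (antitone_dampedMass hΦnn hΦ T hlt.le).trans hmass

theorem monotone_gronwallRate (hΦnn : ∀ t ≥ 0, 0 ≤ Φ t) (hΦ : LocallyIntegrableOn Φ (Ici 0)) :
    Monotone (gronwallRate Φ) := fun _ T₂ hT =>
  add_le_add_left (csInf_le_csInf ⟨0, fun _ hl => hl.1⟩ (admissibleRates_nonempty hΦnn hΦ T₂)
    (antitone_admissibleRates hΦnn hΦ hT)) 1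

end gronwallRate

section estimate

variable {Φ g u : ℝ → ℝ} {l T : ℝ}

theorem setIntegral_mul_le_exp_mul_dampedMass {r V : ℝ} (hΦnn : ∀ t ≥ 0, 0 ≤ Φ t)
    (hΦ : LocallyIntegrableOn Φ (Ici 0)) (hr : 0 ≤ r) (hunn : ∀ s ∈ Ioc 0 r, 0 ≤ u s)
    (hu : ∀ s ∈ Ioc 0 r, u s ≤ exp (l * s) * V) :
    ∫ s in Ioc 0 r, Φ (r - s) * u s ≤ exp (l * r) * V * dampedMass Φ l r := by
  calc ∫ s in Ioc 0 r, Φ (r - s) * u s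
      ≤ ∫ s in Ioc 0 r, exp (l * r) * V * (exp (-l * (r - s)) * Φ (r - s)) := by
        refine integral_mono_of_nonneg ?_
          ((integrableOn_Ioc_comp_sub_left hr (integrableOn_exp_mul_Ioc hΦ l r)).const_mul _) ?_
        · exact ae_restrict_of_forall_mem measurableSet_Ioc fun s hs =>
            mul_nonneg (hΦnn _ (sub_nonneg.2 hs.2)) (hunn s hs)
        · refine ae_restrict_of_forall_mem measurableSet_Ioc fun s hs => ?_
          have hexp : exp (l * r) * exp (-l * (r - s)) = exp (l * s) := by
            rw [← exp_add]; ring_nf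
          calc Φ (r - s) * u s ≤ Φ (r - s) * (exp (l * s) * V) :=
                mul_le_mul_of_nonneg_left (hu s hs) (hΦnn _ (sub_nonneg.2 hs.2))
            _ = _ := by rw [← hexp]; ring
    _ = exp (l * r) * V * dampedMass Φ l r := by
        rw [integral_const_mul, integral_Ioc_comp_sub_left (fun τ => exp (-l * τ) * Φ τ) hr]
        rfl

theorem exp_neg_mul_le_add_half {G V : ℝ} (hΦnn : ∀ t ≥ 0, 0 ≤ Φ t)
    (hΦ : LocallyIntegrableOn Φ (Ici 0)) (hl : 0 ≤ l) (hmass : dampedMass Φ l T ≤ 1 / 2)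
    (hgnn : ∀ t ∈ Icc 0 T, 0 ≤ g t) (hG : ∀ t ∈ Icc 0 T, g t ≤ G)
    (hunn : ∀ t ∈ Icc 0 T, 0 ≤ u t) (hV : ∀ t ∈ Icc 0 T, u t ≤ exp (l * t) * V)
    (hineq : ∀ t ∈ Icc 0 T, u t ≤ g t + ∫ s in Ioc 0 t, Φ (t - s) * u s) :
    ∀ r ∈ Icc 0 T, exp (-l * r) * u r ≤ G + V / 2 := by
  intro r hr
  have h0 : (0 : ℝ) ∈ Icc 0 T := ⟨le_rfl, hr.1.trans hr.2⟩
  have hV0 : 0 ≤ V := by simpa using (hunn 0 h0).trans (hV 0 h0)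
  have hsub : Ioc 0 r ⊆ Icc 0 T := fun s hs => ⟨hs.1.le, hs.2.trans hr.2⟩
  have hconv : ∫ s in Ioc 0 r, Φ (r - s) * u s ≤ exp (l * r) * V * (1 / 2) :=
    (setIntegral_mul_le_exp_mul_dampedMass hΦnn hΦ hr.1 (fun s hs => hunn s (hsub hs))
      (fun s hs => hV s (hsub hs))).trans
      (mul_le_mul_of_nonneg_left ((monotone_dampedMass hΦnn hΦ l hr.2).trans hmass)
        (by positivity))
  have hexp : exp (-l * r) * exp (l * r) = 1 := by rw [← exp_add]; ring_nf; exact exp_zero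
  have hexp_le : exp (-l * r) ≤ 1 := exp_le_one_iff.2 (by nlinarith [hr.1])
  calc exp (-l * r) * u r ≤ exp (-l * r) * (g r + exp (l * r) * V * (1 / 2)) :=
        mul_le_mul_of_nonneg_left ((hineq r hr).trans (add_le_add_right hconv _)) (exp_pos _).le
    _ = exp (-l * r) * g r + V / 2 := by linear_combination (V / 2) * hexp
    _ ≤ G + V / 2 :=
        add_le_add_left ((mul_le_of_le_one_left (hgnn r hr) hexp_le).trans (hG r hr)) _

theorem le_two_mul_exp_mul_sSup (hΦnn : ∀ t ≥ 0, 0 ≤ Φ t) (hΦ : LocallyIntegrableOn Φ (Ici 0))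
    (hl : 0 ≤ l) (hmass : dampedMass Φ l T ≤ 1 / 2)
    (hgnn : ∀ t ∈ Icc 0 T, 0 ≤ g t) (hg : BddAbove (g '' Icc 0 T))
    (hunn : ∀ t ∈ Icc 0 T, 0 ≤ u t) (hu : BddAbove (u '' Icc 0 T))
    (hineq : ∀ t ∈ Icc 0 T, u t ≤ g t + ∫ s in Ioc 0 t, Φ (t - s) * u s) :
    ∀ t ∈ Icc 0 T, u t ≤ 2 * exp (l * T) * sSup (g '' Icc 0 T) := by
  intro t ht
  set v : ℝ → ℝ := fun s => exp (-l * s) * u s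
  have hvu : ∀ s ∈ Icc 0 T, v s ≤ u s := fun s hs =>
    mul_le_of_le_one_left (hunn s hs) (exp_le_one_iff.2 (by nlinarith [hs.1]))
  have hv : BddAbove (v '' Icc 0 T) := by
    obtain ⟨B, hB⟩ := hu
    exact ⟨B, forall_mem_image.2 fun s hs => (hvu s hs).trans (hB (mem_image_of_mem u hs))⟩
  set V := sSup (v '' Icc 0 T)
  have hV0 : 0 ≤ V :=
    (mul_nonneg (exp_pos _).le (hunn t ht)).trans (le_csSup hv (mem_image_of_mem v ht))
  have huV : ∀ s ∈ Icc 0 T, u s ≤ exp (l * s) * V := fun s hs => by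
    calc u s = exp (l * s) * v s := by
          simp only [v, ← mul_assoc, ← exp_add, neg_mul, add_neg_cancel, exp_zero, one_mul]
      _ ≤ exp (l * s) * V := mul_le_mul_of_nonneg_left (le_csSup hv (mem_image_of_mem v hs))
          (exp_pos _).le
  have hVG : V ≤ sSup (g '' Icc 0 T) + V / 2 :=
    csSup_le ((nonempty_of_mem ht).image v) <| forall_mem_image.2 <|
      exp_neg_mul_le_add_half hΦnn hΦ hl hmass hgnn
        (fun s hs => le_csSup hg (mem_image_of_mem g hs)) hunn huV hineq
  calc u t ≤ exp (l * t) * V := huV t ht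
    _ ≤ exp (l * T) * V :=
        mul_le_mul_of_nonneg_right (exp_le_exp.2 (mul_le_mul_of_nonneg_left ht.2 hl)) hV0
    _ ≤ 2 * exp (l * T) * sSup (g '' Icc 0 T) := by nlinarith [exp_pos (l * T)]

end estimate

/-- generalized Grönwall lemma. If `Φ : [0,∞) → [0,∞)` is locally
integrable, `g : [0,∞) → [0,∞)` is locally bounded, and the locally bounded nonnegative
function `u` satisfies `u t ≤ g t + ∫₀ᵗ Φ(t-s) u s ds` for all `t ≥ 0`, then there is a
nondecreasing constant function `T ↦ C T`, depending only on `T` and `Φ`, with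
`sup_{[0,T]} u ≤ C T * sup_{[0,T]} g`. -/
theorem stmt1 (Φ : ℝ → ℝ) (hΦnn : ∀ t ≥ 0, 0 ≤ Φ t)
    (hΦ : LocallyIntegrableOn Φ (Ici 0)) :
    ∃ C : ℝ → ℝ, MonotoneOn C (Ioi 0) ∧
      ∀ g u : ℝ → ℝ,
        (∀ t ≥ 0, 0 ≤ g t) → (∀ T > 0, ∃ B, ∀ t ∈ Icc 0 T, g t ≤ B) →
        (∀ t ≥ 0, 0 ≤ u t) → (∀ T > 0, ∃ B, ∀ t ∈ Icc 0 T, u t ≤ B) →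
        (∀ t ≥ 0, u t ≤ g t + ∫ s in Ioc 0 t, Φ (t - s) * u s) →
        ∀ T > 0, ∀ t ∈ Icc 0 T, u t ≤ C T * sSup (g '' Icc 0 T) := by
  refine ⟨fun T => 2 * exp (gronwallRate Φ T * T), fun T₁ hT₁ T₂ _ hT => ?_, ?_⟩
  · have hexponent : gronwallRate Φ T₁ * T₁ ≤ gronwallRate Φ T₂ * T₂ :=
      mul_le_mul (monotone_gronwallRate hΦnn hΦ hT) hT hT₁.le (gronwallRate_nonneg hΦnn hΦ T₂)
    exact mul_le_mul_of_nonneg_left (exp_le_exp.2 hexponent) zero_le_two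
  · intro g u hgnn hgB hunn huB hineq T hT t ht
    obtain ⟨Bg, hBg⟩ := hgB T hT
    obtain ⟨Bu, hBu⟩ := huB T hT
    exact le_two_mul_exp_mul_sSup hΦnn hΦ (gronwallRate_nonneg hΦnn hΦ T)
      (dampedMass_gronwallRate_le hΦnn hΦ T) (fun s hs => hgnn s hs.1)
      ⟨Bg, forall_mem_image.2 hBg⟩ (fun s hs => hunn s hs.1) ⟨Bu, forall_mem_image.2 hBu⟩
      (fun s hs => hineq s hs.1) t ht
end

section
/- Let Ψ₀ : ℝ → ℝ₊ be Lipschitz continuous, h : ℝ₊ → ℝ locally integrable, f₀ : ℝ₊ → ℝ continuous. Then there is a unique continuous function λ̄ : ℝ₊ → ℝ₊ satisfying the convolution fixed-point equation λ̄(t) = Ψ₀(∫₀ᵗ h(t−z) λ̄(z) dz + f₀(t)) for all t ≥ 0. -/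
/-!
For `K` large, `L ∫₀ᵀ |h w| e^{-Kw} dw < 1` by dominated convergence, and then
`u ↦ Ψ₀(∫₀ᵗ h(t - z) u(z) dz + f₀(t))` is a contraction of `C([0, T])` for the Bielecki norm
`sup e^{-Kt} |u t|`: the weight `e^{Kt}` factors out of the convolution as
`e^{K(t-w)} = e^{Kt} e^{-Kw}`. The unique fixed points on the intervals `[0, n]` are therefore
compatible and glue to a global solution, which is nonnegative because `Ψ₀` is.
-/

open MeasureTheory Set Filter Topology Real
open scoped NNReal

namespace MeanFieldHawkes

noncomputable def volterraMap (Ψ h f u : ℝ → ℝ) (t : ℝ) : ℝ :=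
  Ψ ((∫ z in Ioc 0 t, h (t - z) * u z) + f t)

lemma volterraMap_congr {Ψ h f u v : ℝ → ℝ} {t : ℝ} (huv : EqOn u v (Ioc 0 t)) :
    volterraMap Ψ h f u t = volterraMap Ψ h f v t := by
  unfold volterraMap
  congr 2
  exact setIntegral_congr_fun measurableSet_Ioc fun z hz => by simp only [huv hz]

lemma integrableOn_Ioc_of_locallyIntegrableOn {h : ℝ → ℝ} (hh : LocallyIntegrableOn h (Ici 0))
    (T : ℝ) : IntegrableOn h (Ioc 0 T) :=
  (hh.integrableOn_compact_subset Icc_subset_Ici_self isCompact_Icc).mono_set Ioc_subset_Icc_self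

lemma integral_Ioc_comp_sub_mul (h u : ℝ → ℝ) (t : ℝ) :
    ∫ z in Ioc 0 t, h (t - z) * u z = ∫ w in Ioc 0 t, h w * u (t - w) := by
  rcases le_total t 0 with ht | ht
  · simp [Ioc_eq_empty_of_le ht]
  · rw [← intervalIntegral.integral_of_le ht, ← intervalIntegral.integral_of_le ht]
    simpa using
      intervalIntegral.integral_comp_sub_left (fun w => h w * u (t - w)) t (a := 0) (b := t)

lemma continuous_integral_Ioc_mul_comp_sub {h u : ℝ → ℝ} (hh : LocallyIntegrableOn h (Ici 0))
    (hu : Continuous u) : Continuous fun t => ∫ w in Ioc 0 t, h w * u (t - w) := by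
  refine continuous_iff_continuousAt.2 fun t₀ => ?_
  set T := |t₀| + 1
  have hT₀ : t₀ < T := by linarith [le_abs_self t₀]
  have hhT := integrableOn_Ioc_of_locallyIntegrableOn hh T
  obtain ⟨M, hM⟩ :=
    isCompact_Icc.exists_bound_of_continuousOn (hu.continuousOn (s := Icc (-2 * T) T))
  have hM₀ : 0 ≤ M := (norm_nonneg _).trans (hM 0 ⟨by linarith [abs_nonneg t₀], by positivity⟩)
  have hnear : ∀ᶠ t in 𝓝 t₀, t ∈ Ioo (t₀ - 1) T := Ioo_mem_nhds (by linarith) hT₀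
  -- a fixed domain of integration, so that dominated convergence applies
  have hcut : ∀ t ≤ T, ∫ w in Ioc 0 t, h w * u (t - w)
      = ∫ w in Ioc 0 T, (Iic t).indicator (fun w => h w * u (t - w)) w := by
    intro t ht
    rw [setIntegral_indicator measurableSet_Iic, Ioc_inter_Iic, min_eq_right ht]
  refine ContinuousAt.congr ?_ (hnear.mono fun t ht => (hcut t ht.2.le).symm)
  refine continuousAt_of_dominated (bound := fun w => ‖h w‖ * M) ?_ ?_ (hhT.norm.mul_const M) ?_
  · refine Eventually.of_forall fun t => ?_
    have hut : Continuous fun w => u (t - w) := by fun_prop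
    exact (hhT.aestronglyMeasurable.mul hut.aestronglyMeasurable).indicator measurableSet_Iic
  · filter_upwards [hnear] with t ht
    filter_upwards [ae_restrict_mem measurableSet_Ioc] with w hw
    by_cases hwt : w ≤ t
    · rw [indicator_of_mem (mem_Iic.2 hwt), norm_mul]
      refine mul_le_mul_of_nonneg_left (hM _ ⟨?_, by linarith [hw.1, ht.2]⟩) (norm_nonneg _)
      linarith [hw.2, ht.1, neg_abs_le t₀]
    · rw [indicator_of_notMem (notMem_Iic.2 (not_le.1 hwt)), norm_zero]
      positivity
  · filter_upwards [(volume.restrict (Ioc 0 T)).ae_ne t₀] with w hw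
    rcases hw.lt_or_gt with hw | hw
    · refine (show Continuous fun t => h w * u (t - w) by fun_prop).continuousAt.congr ?_
      filter_upwards [Ioi_mem_nhds hw] with t ht
      rw [indicator_of_mem (mem_Iic.2 (mem_Ioi.1 ht).le)]
    · refine (continuousAt_const (y := (0 : ℝ))).congr ?_
      filter_upwards [Iio_mem_nhds hw] with t ht
      rw [indicator_of_notMem (notMem_Iic.2 (mem_Iio.1 ht))]

lemma continuousOn_volterraMap {Ψ h f u : ℝ → ℝ} {s : Set ℝ} (hΨ : Continuous Ψ)
    (hh : LocallyIntegrableOn h (Ici 0)) (hf : ContinuousOn f s) (hu : Continuous u) :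
    ContinuousOn (volterraMap Ψ h f u) s := by
  have hconv := continuous_integral_Ioc_mul_comp_sub hh hu
  simp only [← integral_Ioc_comp_sub_mul] at hconv
  exact hΨ.comp_continuousOn (hconv.continuousOn.add hf)

lemma tendsto_setIntegral_abs_mul_exp_neg_mul {h : ℝ → ℝ} {T : ℝ}
    (hh : IntegrableOn h (Ioc 0 T)) :
    Tendsto (fun K => ∫ w in Ioc 0 T, |h w| * exp (-(K * w))) atTop (𝓝 0) := by
  have hlim : Tendsto (fun K => ∫ w in Ioc 0 T, |h w| * exp (-(K * w))) atTop
      (𝓝 (∫ _ in Ioc 0 T, (0 : ℝ))) := by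
    refine tendsto_integral_filter_of_dominated_convergence (fun w => |h w|) ?_ ?_ hh.abs ?_
    · refine Eventually.of_forall fun K => hh.abs.aestronglyMeasurable.mul ?_
      exact (by fun_prop : Continuous fun w => exp (-(K * w))).aestronglyMeasurable
    · filter_upwards [eventually_ge_atTop 0] with K hK
      filter_upwards [ae_restrict_mem measurableSet_Ioc] with w hw
      rw [Real.norm_of_nonneg (by positivity)]
      exact mul_le_of_le_one_right (abs_nonneg _) (exp_le_one_iff.2 (by nlinarith [hw.1]))
    · filter_upwards [ae_restrict_mem measurableSet_Ioc] with w hw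
      simpa using ((tendsto_exp_atBot.comp (tendsto_neg_atTop_atBot.comp
        (tendsto_id.atTop_mul_const hw.1))).const_mul |h w|)
  simpa using hlim

lemma abs_integral_Ioc_mul_comp_sub_le {h v : ℝ → ℝ} {T K D t : ℝ}
    (hh : IntegrableOn h (Ioc 0 T)) (hv : ∀ x ∈ Icc 0 T, |v x| ≤ exp (K * x) * D)
    (ht : t ∈ Icc 0 T) :
    |∫ w in Ioc 0 t, h w * v (t - w)|
      ≤ (∫ w in Ioc 0 T, |h w| * exp (-(K * w))) * (exp (K * t) * D) := by
  have hD : 0 ≤ D := by simpa using (abs_nonneg _).trans (hv 0 ⟨le_rfl, ht.1.trans ht.2⟩)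
  have hg : IntegrableOn (fun w => |h w| * exp (-(K * w))) (Ioc 0 T) :=
    IntegrableOn.mul_continuousOn_of_subset hh.abs
      (by fun_prop : Continuous fun w => exp (-(K * w))).continuousOn measurableSet_Ioc
      isCompact_Icc Ioc_subset_Icc_self
  have hsub : Ioc 0 t ⊆ Ioc 0 T := Ioc_subset_Ioc_right ht.2
  calc |∫ w in Ioc 0 t, h w * v (t - w)|
      ≤ ∫ w in Ioc 0 t, |h w| * exp (-(K * w)) * (exp (K * t) * D) := by
        rw [← norm_eq_abs]
        refine norm_integral_le_of_norm_le ((hg.mono_set hsub).mul_const _) ?_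
        filter_upwards [ae_restrict_mem measurableSet_Ioc] with w hw
        calc ‖h w * v (t - w)‖ = |h w| * |v (t - w)| := by
              rw [norm_mul, norm_eq_abs, norm_eq_abs]
          _ ≤ |h w| * (exp (K * (t - w)) * D) :=
            mul_le_mul_of_nonneg_left (hv _ ⟨by linarith [hw.2], by linarith [hw.1, ht.2]⟩)
              (abs_nonneg _)
          _ = |h w| * exp (-(K * w)) * (exp (K * t) * D) := by
            rw [mul_sub, sub_eq_neg_add, exp_add]; ring
    _ = (∫ w in Ioc 0 t, |h w| * exp (-(K * w))) * (exp (K * t) * D) := integral_mul_const _ _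
    _ ≤ (∫ w in Ioc 0 T, |h w| * exp (-(K * w))) * (exp (K * t) * D) := by
        refine mul_le_mul_of_nonneg_right ?_ (by positivity)
        exact setIntegral_mono_set hg (Eventually.of_forall fun w => by positivity)
          hsub.eventuallyLE

lemma abs_volterraMap_sub_le {Ψ h f u₁ u₂ : ℝ → ℝ} {L : ℝ≥0} {T K D t : ℝ}
    (hΨ : LipschitzWith L Ψ) (hh : IntegrableOn h (Ioc 0 T)) (hu₁ : Continuous u₁)
    (hu₂ : Continuous u₂) (hu : ∀ x ∈ Icc 0 T, |u₁ x - u₂ x| ≤ exp (K * x) * D)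
    (ht : t ∈ Icc 0 T) :
    |volterraMap Ψ h f u₁ t - volterraMap Ψ h f u₂ t|
      ≤ L * (∫ w in Ioc 0 T, |h w| * exp (-(K * w))) * (exp (K * t) * D) := by
  have hint : ∀ u : ℝ → ℝ, Continuous u → IntegrableOn (fun w => h w * u (t - w)) (Ioc 0 t) :=
    fun u hu => (hh.mono_set (Ioc_subset_Ioc_right ht.2)).mul_continuousOn_of_subset
      (by fun_prop : Continuous fun w => u (t - w)).continuousOn measurableSet_Ioc isCompact_Icc
      Ioc_subset_Icc_self
  calc |volterraMap Ψ h f u₁ t - volterraMap Ψ h f u₂ t|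
      ≤ L * |∫ w in Ioc 0 t, h w * (u₁ (t - w) - u₂ (t - w))| := by
        simp only [volterraMap, integral_Ioc_comp_sub_mul, mul_sub,
          integral_sub (hint u₁ hu₁) (hint u₂ hu₂)]
        rw [← add_sub_add_right_eq_sub (∫ w in Ioc 0 t, h w * u₁ (t - w)) _ (f t), ← dist_eq,
          ← dist_eq]
        exact hΨ.dist_le_mul _ _
    _ ≤ L * ((∫ w in Ioc 0 T, |h w| * exp (-(K * w))) * (exp (K * t) * D)) :=
        mul_le_mul_of_nonneg_left (abs_integral_Ioc_mul_comp_sub_le (v := u₁ - u₂) hh hu ht)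
          L.coe_nonneg
    _ = _ := (mul_assoc _ _ _).symm

section Bielecki

variable {T : ℝ} (hT : 0 ≤ T) (K : ℝ)

/- The sup norm of `g` is the Bielecki norm `sup_{x ∈ [0, T]} e^{-Kx} |u x|` of
`u = ofWeighted hT K g`. -/
noncomputable def ofWeighted (g : C(Icc 0 T, ℝ)) (x : ℝ) : ℝ :=
  exp (K * x) * IccExtend hT g x

noncomputable def toWeighted {u : ℝ → ℝ} (hu : ContinuousOn u (Icc 0 T)) : C(Icc 0 T, ℝ) :=
  ⟨fun x => exp (-(K * x)) * u x,
    ((by fun_prop : Continuous fun x : ℝ => exp (-(K * x))).comp continuous_subtype_val).mul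
      hu.domRestrict⟩

lemma continuous_ofWeighted (g : C(Icc 0 T, ℝ)) : Continuous (ofWeighted hT K g) :=
  (by fun_prop : Continuous fun x : ℝ => exp (K * x)).mul g.continuous.Icc_extend'

lemma ofWeighted_toWeighted {u : ℝ → ℝ} (hu : ContinuousOn u (Icc 0 T)) :
    EqOn (ofWeighted hT K (toWeighted K hu)) u (Icc 0 T) := fun x hx => by
  simp [ofWeighted, toWeighted, IccExtend_of_mem _ _ hx, ← mul_assoc, ← exp_add]

lemma abs_ofWeighted_sub_le (g₁ g₂ : C(Icc 0 T, ℝ)) (x : ℝ) :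
    |ofWeighted hT K g₁ x - ofWeighted hT K g₂ x| ≤ exp (K * x) * dist g₁ g₂ := by
  rw [ofWeighted, ofWeighted, ← mul_sub, abs_mul, abs_exp, IccExtend_apply, IccExtend_apply,
    ← dist_eq]
  exact mul_le_mul_of_nonneg_left (ContinuousMap.dist_apply_le_dist _) (exp_nonneg _)

variable {Ψ h f : ℝ → ℝ} (hΨc : Continuous Ψ) (hh : LocallyIntegrableOn h (Ici 0))
  (hf : ContinuousOn f (Icc 0 T))

noncomputable def weightedVolterraMap (g : C(Icc 0 T, ℝ)) : C(Icc 0 T, ℝ) :=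
  toWeighted K (continuousOn_volterraMap hΨc hh hf (continuous_ofWeighted hT K g))

lemma contractingWith_weightedVolterraMap {L : ℝ≥0} (hΨ : LipschitzWith L Ψ)
    (hK : L * ∫ w in Ioc 0 T, |h w| * exp (-(K * w)) < 1) :
    ContractingWith (L * ∫ w in Ioc 0 T, |h w| * exp (-(K * w))).toNNReal
      (weightedVolterraMap hT K hΨ.continuous hh hf) := by
  refine ⟨Real.toNNReal_lt_one.2 hK, LipschitzWith.of_dist_le' fun g₁ g₂ => ?_⟩
  refine (ContinuousMap.dist_le (by positivity)).2 fun x => ?_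
  have key := abs_volterraMap_sub_le (f := f) hΨ (integrableOn_Ioc_of_locallyIntegrableOn hh T)
    (continuous_ofWeighted hT K g₁) (continuous_ofWeighted hT K g₂)
    (fun y _ => abs_ofWeighted_sub_le hT K g₁ g₂ y) x.2
  calc dist (weightedVolterraMap hT K hΨ.continuous hh hf g₁ x)
        (weightedVolterraMap hT K hΨ.continuous hh hf g₂ x)
      = exp (-(K * x)) * |volterraMap Ψ h f (ofWeighted hT K g₁) x
          - volterraMap Ψ h f (ofWeighted hT K g₂) x| := by
        simp only [weightedVolterraMap, toWeighted, ContinuousMap.coe_mk, dist_eq, ← mul_sub,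
          abs_mul, abs_exp]
    _ ≤ exp (-(K * x)) *
          ((L * ∫ w in Ioc 0 T, |h w| * exp (-(K * w))) * (exp (K * x) * dist g₁ g₂)) :=
        mul_le_mul_of_nonneg_left key (exp_nonneg _)
    _ = (L * ∫ w in Ioc 0 T, |h w| * exp (-(K * w))) * dist g₁ g₂ := by
        rw [exp_neg]; field_simp

lemma isFixedPt_toWeighted {lam : ℝ → ℝ} (hlam : ContinuousOn lam (Icc 0 T))
    (heq : EqOn lam (volterraMap Ψ h f lam) (Icc 0 T)) :
    Function.IsFixedPt (weightedVolterraMap hT K hΨc hh hf) (toWeighted K hlam) := by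
  ext x
  change exp (-(K * x)) * volterraMap Ψ h f (ofWeighted hT K (toWeighted K hlam)) x
    = exp (-(K * x)) * lam x
  rw [heq x.2, volterraMap_congr fun z hz =>
    ofWeighted_toWeighted hT K hlam ⟨hz.1.le, hz.2.trans x.2.2⟩]

lemma eqOn_volterraMap_ofWeighted {g : C(Icc 0 T, ℝ)}
    (hg : Function.IsFixedPt (weightedVolterraMap hT K hΨc hh hf) g) :
    EqOn (ofWeighted hT K g) (volterraMap Ψ h f (ofWeighted hT K g)) (Icc 0 T) := fun t ht => by
  conv_lhs => rw [ofWeighted, IccExtend_of_mem _ _ ht, ← hg]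
  change exp (K * t) * (exp (-(K * t)) * volterraMap Ψ h f (ofWeighted hT K g) t) = _
  rw [← mul_assoc, ← exp_add, add_neg_cancel, exp_zero, one_mul]

end Bielecki

variable {Ψ h f : ℝ → ℝ} {L : ℝ≥0} {T : ℝ}

lemma exists_contractingWith_weightedVolterraMap (hΨ : LipschitzWith L Ψ)
    (hh : LocallyIntegrableOn h (Ici 0)) (hf : ContinuousOn f (Icc 0 T)) (hT : 0 ≤ T) :
    ∃ K q, ContractingWith q (weightedVolterraMap hT K hΨ.continuous hh hf) := by
  have hlim := (tendsto_setIntegral_abs_mul_exp_neg_mul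
    (integrableOn_Ioc_of_locallyIntegrableOn hh T)).const_mul (L : ℝ)
  obtain ⟨K, hK⟩ := (hlim.eventually_lt_const (show (L : ℝ) * 0 < 1 by simp)).exists
  exact ⟨K, _, contractingWith_weightedVolterraMap hT K hh hf hΨ hK⟩

theorem exists_continuous_eqOn_volterraMap_Icc (hΨ : LipschitzWith L Ψ)
    (hh : LocallyIntegrableOn h (Ici 0)) (hf : ContinuousOn f (Icc 0 T)) (hT : 0 ≤ T) :
    ∃ lam, Continuous lam ∧ EqOn lam (volterraMap Ψ h f lam) (Icc 0 T) := by
  obtain ⟨K, q, hF⟩ := exists_contractingWith_weightedVolterraMap hΨ hh hf hT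
  exact ⟨_, continuous_ofWeighted hT K _,
    eqOn_volterraMap_ofWeighted hT K _ hh hf hF.fixedPoint_isFixedPt⟩

theorem eqOn_of_eqOn_volterraMap_Icc (hΨ : LipschitzWith L Ψ)
    (hh : LocallyIntegrableOn h (Ici 0)) (hf : ContinuousOn f (Icc 0 T)) (hT : 0 ≤ T)
    {lam₁ lam₂ : ℝ → ℝ} (hc₁ : ContinuousOn lam₁ (Icc 0 T)) (hc₂ : ContinuousOn lam₂ (Icc 0 T))
    (he₁ : EqOn lam₁ (volterraMap Ψ h f lam₁) (Icc 0 T))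
    (he₂ : EqOn lam₂ (volterraMap Ψ h f lam₂) (Icc 0 T)) :
    EqOn lam₁ lam₂ (Icc 0 T) := fun t ht => by
  obtain ⟨K, q, hF⟩ := exists_contractingWith_weightedVolterraMap hΨ hh hf hT
  have hfix := hF.fixedPoint_unique' (isFixedPt_toWeighted hT K _ hh hf hc₁ he₁)
    (isFixedPt_toWeighted hT K _ hh hf hc₂ he₂)
  rw [← ofWeighted_toWeighted hT K hc₁ ht, hfix, ofWeighted_toWeighted hT K hc₂ ht]

theorem exists_continuousOn_eqOn_volterraMap_Ici (hΨ : LipschitzWith L Ψ)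
    (hh : LocallyIntegrableOn h (Ici 0)) (hf : ContinuousOn f (Ici 0)) :
    ∃ lam, ContinuousOn lam (Ici 0) ∧ EqOn lam (volterraMap Ψ h f lam) (Ici 0) := by
  choose S hSc hS using fun n : ℕ =>
    exists_continuous_eqOn_volterraMap_Icc hΨ hh (hf.mono Icc_subset_Ici_self) n.cast_nonneg
  have hagree : ∀ n : ℕ, EqOn (fun t => S ⌈t⌉₊ t) (S n) (Icc 0 n) := fun n t ht =>
    eqOn_of_eqOn_volterraMap_Icc hΨ hh (hf.mono Icc_subset_Ici_self) ht.1
      (hSc _).continuousOn (hSc n).continuousOn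
      (fun s hs => hS _ ⟨hs.1, hs.2.trans (Nat.le_ceil t)⟩)
      (fun s hs => hS n ⟨hs.1, hs.2.trans ht.2⟩) ⟨ht.1, le_rfl⟩
  refine ⟨fun t => S ⌈t⌉₊ t, fun t₀ ht₀ => ?_, fun t ht => ?_⟩
  · have hlt : t₀ < ⌈t₀⌉₊ + 1 := (Nat.le_ceil t₀).trans_lt (lt_add_one _)
    refine (hSc (⌈t₀⌉₊ + 1)).continuousWithinAt.congr_of_eventuallyEq ?_ ?_
    · filter_upwards [self_mem_nhdsWithin, mem_nhdsWithin_of_mem_nhds (Iio_mem_nhds hlt)]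
        with t ht ht'
      exact hagree _ ⟨ht, by exact_mod_cast (mem_Iio.1 ht').le⟩
    · exact hagree _ ⟨ht₀, by exact_mod_cast hlt.le⟩
  · exact (hS _ ⟨ht, Nat.le_ceil t⟩).trans
      (volterraMap_congr fun s hs => (hagree _ ⟨hs.1.le, hs.2.trans (Nat.le_ceil t)⟩).symm)

end MeanFieldHawkes

open MeanFieldHawkes in
theorem stmt11_general (Ψ₀ : ℝ → ℝ) (L : ℝ)
    (hΨLip : ∀ x y, |Ψ₀ x - Ψ₀ y| ≤ L * |x - y|) (hΨnn : ∀ x, 0 ≤ Ψ₀ x)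
    (h f₀ : ℝ → ℝ) (hh : LocallyIntegrableOn h (Ici 0))
    (hf₀ : ContinuousOn f₀ (Ici 0)) :
    ∃ lam : ℝ → ℝ,
      (ContinuousOn lam (Ici 0) ∧ (∀ t ≥ (0:ℝ), 0 ≤ lam t) ∧
        ∀ t ≥ (0:ℝ), lam t = Ψ₀ ((∫ z in Ioc 0 t, h (t - z) * lam z) + f₀ t)) ∧
      ∀ lam' : ℝ → ℝ,
        (ContinuousOn lam' (Ici 0) ∧ (∀ t ≥ (0:ℝ), 0 ≤ lam' t) ∧
          ∀ t ≥ (0:ℝ), lam' t = Ψ₀ ((∫ z in Ioc 0 t, h (t - z) * lam' z) + f₀ t)) →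
        ∀ t ≥ (0:ℝ), lam' t = lam t := by
  have hΨ : LipschitzWith L.toNNReal Ψ₀ := LipschitzWith.of_dist_le' fun x y => by
    simpa only [dist_eq] using hΨLip x y
  obtain ⟨lam, hc, heq⟩ := exists_continuousOn_eqOn_volterraMap_Ici hΨ hh hf₀
  refine ⟨lam, ⟨hc, fun t ht => (heq ht).symm ▸ hΨnn _, fun t ht => heq ht⟩, ?_⟩
  rintro lam' ⟨hc', -, heq'⟩ t ht
  exact eqOn_of_eqOn_volterraMap_Icc hΨ hh (hf₀.mono Icc_subset_Ici_self) ht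
    (hc'.mono Icc_subset_Ici_self) (hc.mono Icc_subset_Ici_self) (fun s hs => heq' s hs.1)
    (fun s hs => heq hs.1) ⟨ht, le_rfl⟩

/-- For `Ψ₀ : ℝ → [0,∞)` Lipschitz, `h` locally integrable on `[0,∞)`
and `f₀` continuous, there is a unique continuous function `λ̄ : [0,∞) → [0,∞)` satisfying
`λ̄ t = Ψ₀(∫₀ᵗ h(t-z) λ̄ z dz + f₀ t)` for all `t ≥ 0`. -/
theorem stmt11 (Ψ₀ : ℝ → ℝ) (L : ℝ) (hL : 0 ≤ L)
    (hΨLip : ∀ x y, |Ψ₀ x - Ψ₀ y| ≤ L * |x - y|) (hΨnn : ∀ x, 0 ≤ Ψ₀ x)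
    (h f₀ : ℝ → ℝ) (hh : LocallyIntegrableOn h (Ici 0))
    (hf₀ : ContinuousOn f₀ (Ici 0)) :
    ∃ lam : ℝ → ℝ,
      (ContinuousOn lam (Ici 0) ∧ (∀ t ≥ (0:ℝ), 0 ≤ lam t) ∧
        ∀ t ≥ (0:ℝ), lam t = Ψ₀ ((∫ z in Ioc 0 t, h (t - z) * lam z) + f₀ t)) ∧
      ∀ lam' : ℝ → ℝ,
        (ContinuousOn lam' (Ici 0) ∧ (∀ t ≥ (0:ℝ), 0 ≤ lam' t) ∧
          ∀ t ≥ (0:ℝ), lam' t = Ψ₀ ((∫ z in Ioc 0 t, h (t - z) * lam' z) + f₀ t)) →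
        ∀ t ≥ (0:ℝ), lam' t = lam t :=
  stmt11_general Ψ₀ L hΨLip hΨnn h f₀ hh hf₀
end

section
/- Let N and N̄ be point processes on ℝ that coincide on (−∞,0] and whose last point before 0 satisfies −T₀ ≤ M_{T₀} almost surely, with predictable age processes S_{t−} and S̄_{t−}. Then for every θ > 0, E[sup_{t∈[0,θ]} |S_{t−} − S̄_{t−}|] ≤ (M_{T₀} + θ) · P(sup_{t∈[0,θ]} |N_t − N̄_t| ≠ 0) ≤ (M_{T₀} + θ) · E[sup_{t∈[0,θ]} |N_t − N̄_t|]. -/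
/-!
Where the counting processes agree on `[0, θ]`, local finiteness forces the configurations to
agree on `(0, θ]`; together with the common past this makes the ages agree on `[0, θ]`.
Everywhere else both ages at time `t` lie in `[0, t - T₀]` for the common point `T₀ ∈ [-M₀, 0]`,
so their difference is at most `M₀ + θ`; integrating gives the first bound. The second is Markov's
inequality, since the integer-valued counting discrepancy is at least `1` wherever it is nonzero.
-/

open MeasureTheory Set

/-- The predictable age at time `t` of the point configuration `N`:
`S_{t-} = t - sup{T ∈ N, T < t}`. -/
noncomputable def predAge (N : Set ℝ) (t : ℝ) : ℝ := t - sSup {T ∈ N | T < t}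

/-- The counting process of the point configuration `N`: `N_t = #(N ∩ (0,t])`. -/
noncomputable def countProc (N : Set ℝ) (t : ℝ) : ℝ := (N ∩ Ioc 0 t).ncard

namespace PointConfiguration

variable {A B C : Set ℝ} {s t u x θ T : ℝ}

lemma predAge_eq : predAge A t = t - sSup (A ∩ Iio t) := rfl

lemma predAge_eq_of_inter_Iic_eq (h : A ∩ Iic u = B ∩ Iic u) (ht : t ≤ u) :
    predAge A t = predAge B t := by
  have hsub : Iio t ⊆ Iic u := fun y hy => (le_of_lt hy).trans ht
  rw [predAge_eq, predAge_eq, ← inter_eq_right.2 hsub, ← inter_assoc, h, inter_assoc]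

lemma predAge_mem_Icc (hT : T ∈ A) (hTt : T < t) : predAge A t ∈ Icc 0 (t - T) := by
  have hbdd : BddAbove (A ∩ Iio t) := ⟨t, fun y hy => le_of_lt hy.2⟩
  have hle : sSup (A ∩ Iio t) ≤ t := csSup_le ⟨T, hT, hTt⟩ fun y hy => le_of_lt hy.2
  have hge : T ≤ sSup (A ∩ Iio t) := le_csSup hbdd ⟨hT, hTt⟩
  rw [predAge_eq]
  constructor <;> linarith

lemma abs_predAge_sub_le (hA : T ∈ A) (hB : T ∈ B) (hTt : T < t) :
    |predAge A t - predAge B t| ≤ t - T :=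
  abs_sub_le_of_nonneg_of_le (predAge_mem_Icc hA hTt).1 (predAge_mem_Icc hA hTt).2
    (predAge_mem_Icc hB hTt).1 (predAge_mem_Icc hB hTt).2

lemma iSup_abs_predAge_sub_le (hpast : A ∩ Iic 0 = B ∩ Iic 0) (hT : T ∈ A) (hT0 : T ≤ 0)
    (hθ : 0 ≤ θ) : ⨆ t : Icc (0 : ℝ) θ, |predAge A t - predAge B t| ≤ θ - T := by
  have : Nonempty (Icc (0 : ℝ) θ) := ⟨⟨0, le_rfl, hθ⟩⟩
  have hTB : T ∈ B := (hpast ▸ (⟨hT, hT0⟩ : T ∈ A ∩ Iic 0) : T ∈ B ∩ Iic 0).1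
  refine ciSup_le fun ⟨t, ht0, htθ⟩ => ?_
  rcases ht0.eq_or_lt with rfl | ht
  -- at `t = 0` the bound of `abs_predAge_sub_le` is unavailable when `T = 0`
  · rw [predAge_eq_of_inter_Iic_eq hpast le_rfl, sub_self, abs_zero]
    linarith
  · exact (abs_predAge_sub_le hT hTB (hT0.trans_lt ht)).trans (by linarith)

lemma countProc_nonneg : 0 ≤ countProc A t := Nat.cast_nonneg _

lemma countProc_mono (hA : (A ∩ Ioc 0 u).Finite) (h : t ≤ u) : countProc A t ≤ countProc A u :=
  Nat.cast_le.2 <| ncard_le_ncard (inter_subset_inter_right _ (Ioc_subset_Ioc_right h)) hA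

lemma one_le_abs_countProc_sub (h : countProc A t ≠ countProc B t) :
    1 ≤ |countProc A t - countProc B t| := by
  have hne : ((A ∩ Ioc 0 t).ncard : ℤ) - (B ∩ Ioc 0 t).ncard ≠ 0 :=
    sub_ne_zero.2 fun he => h (by simp only [countProc]; exact_mod_cast he)
  have := Int.one_le_abs hne
  simp only [countProc]
  exact_mod_cast this

lemma ncard_inter_Ioc_eq_add (hs : 0 ≤ s) (hsx : s ≤ x) (hC : (C ∩ Ioc 0 x).Finite) :
    (C ∩ Ioc 0 x).ncard = (C ∩ Ioc 0 s).ncard + (C ∩ Ioc s x).ncard := by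
  rw [← ncard_union_eq (disjoint_left.2 fun y hy1 hy2 => not_lt.2 hy1.2.2 hy2.2.1)
    (hC.subset (inter_subset_inter_right _ (Ioc_subset_Ioc_right hsx)))
    (hC.subset (inter_subset_inter_right _ (Ioc_subset_Ioc_left hs))),
    ← inter_union_distrib_left, Ioc_union_Ioc_eq_Ioc hs hsx]

lemma exists_inter_Ioo_eq_empty (hx : 0 < x) (hC : (C ∩ Ioo 0 x).Finite) :
    ∃ s ∈ Ico 0 x, C ∩ Ioo s x = ∅ := by
  have hD : (insert 0 (C ∩ Ioo 0 x)).Finite := hC.insert 0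
  have hmem := (insert_nonempty 0 (C ∩ Ioo 0 x)).csSup_mem hD
  have hs0 : 0 ≤ sSup (insert 0 (C ∩ Ioo 0 x)) := le_csSup hD.bddAbove (mem_insert _ _)
  refine ⟨_, ⟨hs0, ?_⟩, eq_empty_of_forall_notMem fun y ⟨hyC, hys, hyx⟩ => ?_⟩
  · rcases hmem with h | h
    · rwa [h]
    · exact h.2.2
  · have := le_csSup hD.bddAbove (mem_insert_of_mem _ ⟨hyC, hs0.trans_lt hys, hyx⟩)
    linarith

lemma ncard_inter_singleton [Decidable (x ∈ A)] :
    (A ∩ {x}).ncard = if x ∈ A then 1 else 0 := by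
  split_ifs with h
  · rw [inter_eq_right.2 (singleton_subset_iff.2 h), ncard_singleton]
  · rw [inter_singleton_eq_empty.2 h, ncard_empty]

/-- At `x` each counting process jumps by `1` or `0` according to membership of `x`, and local
finiteness provides a gap `(s, x)` free of points of either configuration. -/
lemma inter_Ioc_eq_of_countProc_eq (hA : (A ∩ Ioc 0 θ).Finite) (hB : (B ∩ Ioc 0 θ).Finite)
    (h : ∀ t ∈ Icc 0 θ, countProc A t = countProc B t) : A ∩ Ioc 0 θ = B ∩ Ioc 0 θ := by
  ext x
  refine and_congr_left fun ⟨hx0, hxθ⟩ => ?_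
  have hAB : ((A ∪ B) ∩ Ioo 0 x).Finite := (hA.union hB).subset <| by
    rw [← union_inter_distrib_right]
    exact inter_subset_inter_right _ (Ioo_subset_Ioc_self.trans (Ioc_subset_Ioc_right hxθ))
  obtain ⟨s, ⟨hs0, hsx⟩, hgap⟩ := exists_inter_Ioo_eq_empty hx0 hAB
  have hjump : ∀ {C}, C ⊆ A ∪ B → (C ∩ Ioc 0 θ).Finite →
      (C ∩ Ioc 0 x).ncard = (C ∩ Ioc 0 s).ncard + (C ∩ {x}).ncard := fun {C} hC hCfin => by
    rw [ncard_inter_Ioc_eq_add hs0 hsx.le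
      (hCfin.subset (inter_subset_inter_right _ (Ioc_subset_Ioc_right hxθ))),
      ← Ioo_insert_right hsx, insert_eq, inter_union_distrib_left,
      eq_empty_of_subset_empty ((inter_subset_inter_left _ hC).trans hgap.subset), union_empty]
  have hcount : ∀ t ∈ Icc 0 θ, (A ∩ Ioc 0 t).ncard = (B ∩ Ioc 0 t).ncard := fun t ht =>
    Nat.cast_injective (h t ht)
  have hx := hcount x ⟨hx0.le, hxθ⟩
  have hs := hcount s ⟨hs0, hsx.le.trans hxθ⟩
  classical
  have hjumpA := hjump subset_union_left hA
  have hjumpB := hjump subset_union_right hB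
  rw [ncard_inter_singleton] at hjumpA hjumpB
  split_ifs at hjumpA hjumpB <;> simp_all

lemma inter_Iic_eq_of_countProc_eq (hpast : A ∩ Iic 0 = B ∩ Iic 0) (hθ : 0 ≤ θ)
    (hA : (A ∩ Ioc 0 θ).Finite) (hB : (B ∩ Ioc 0 θ).Finite)
    (h : ∀ t ∈ Icc 0 θ, countProc A t = countProc B t) : A ∩ Iic θ = B ∩ Iic θ := by
  rw [← Iic_union_Ioc_eq_Iic hθ, inter_union_distrib_left, inter_union_distrib_left, hpast,
    inter_Ioc_eq_of_countProc_eq hA hB h]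

section Supremum

variable (hA : (A ∩ Ioc 0 θ).Finite) (hB : (B ∩ Ioc 0 θ).Finite)
include hA hB

lemma bddAbove_range_abs_countProc_sub :
    BddAbove (range fun t : Icc (0 : ℝ) θ => |countProc A t - countProc B t|) := by
  refine ⟨countProc A θ + countProc B θ, ?_⟩
  rintro _ ⟨⟨t, -, htθ⟩, rfl⟩
  exact abs_sub_le_of_nonneg_of_le
    countProc_nonneg ((countProc_mono hA htθ).trans (le_add_of_nonneg_right countProc_nonneg))
    countProc_nonneg ((countProc_mono hB htθ).trans (le_add_of_nonneg_left countProc_nonneg))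

lemma countProc_eq_of_iSup_abs_sub_eq_zero
    (h : ⨆ t : Icc (0 : ℝ) θ, |countProc A t - countProc B t| = 0) :
    ∀ t ∈ Icc 0 θ, countProc A t = countProc B t := fun t ht => by
  have := h ▸ le_ciSup (bddAbove_range_abs_countProc_sub hA hB) ⟨t, ht⟩
  exact sub_eq_zero.1 (abs_nonpos_iff.1 this)

lemma one_le_iSup_abs_countProc_sub
    (h : ⨆ t : Icc (0 : ℝ) θ, |countProc A t - countProc B t| ≠ 0) :
    1 ≤ ⨆ t : Icc (0 : ℝ) θ, |countProc A t - countProc B t| := by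
  obtain ⟨t, ht⟩ : ∃ t : Icc (0 : ℝ) θ, countProc A t ≠ countProc B t := by
    by_contra! hall
    exact h (by simp only [hall, sub_self, abs_zero, Real.iSup_const_zero])
  exact (one_le_abs_countProc_sub ht).trans (le_ciSup (bddAbove_range_abs_countProc_sub hA hB) t)

lemma iSup_abs_predAge_sub_eq_zero (hpast : A ∩ Iic 0 = B ∩ Iic 0) (hθ : 0 ≤ θ)
    (h : ⨆ t : Icc (0 : ℝ) θ, |countProc A t - countProc B t| = 0) :
    ⨆ t : Icc (0 : ℝ) θ, |predAge A t - predAge B t| = 0 := by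
  have hIic := inter_Iic_eq_of_countProc_eq hpast hθ hA hB
    (countProc_eq_of_iSup_abs_sub_eq_zero hA hB h)
  simp only [fun t : Icc (0 : ℝ) θ => predAge_eq_of_inter_Iic_eq hIic t.2.2, sub_self,
    abs_zero, Real.iSup_const_zero]

end Supremum

end PointConfiguration

section Probability

variable {Ω : Type*} [MeasurableSpace Ω] {μ : Measure Ω} [IsFiniteMeasure μ] {F f : Ω → ℝ} {c : ℝ}

theorem integral_le_mul_measure_ne_zero (hF : Integrable F μ) (hf : AEStronglyMeasurable f μ)
    (hFc : ∀ᵐ ω ∂μ, F ω ≤ c) (hF0 : ∀ᵐ ω ∂μ, f ω = 0 → F ω ≤ 0) :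
    ∫ ω, F ω ∂μ ≤ c * (μ {ω | f ω ≠ 0}).toReal := by
  set s := {ω | f ω ≠ 0}
  have hs : NullMeasurableSet s μ := (hf.nullMeasurableSet_eq_fun aestronglyMeasurable_const).compl
  have hle : ∀ᵐ ω ∂μ, F ω ≤ s.indicator (fun _ => c) ω := by
    filter_upwards [hFc, hF0] with ω hωc hω0
    by_cases hω : ω ∈ s
    · rwa [indicator_of_mem hω]
    · rw [indicator_of_notMem hω]
      exact hω0 (not_not.1 hω)
  calc ∫ ω, F ω ∂μ ≤ ∫ ω, s.indicator (fun _ => c) ω ∂μ :=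
        integral_mono_ae hF ((integrable_const c).indicator₀ hs) hle
    _ = c * (μ s).toReal := by
        rw [integral_indicator₀ hs, setIntegral_const, smul_eq_mul, mul_comm, measureReal_def]

theorem measure_ne_zero_toReal_le_integral (hf : Integrable f μ)
    (h : ∀ᵐ ω ∂μ, f ω ≠ 0 → 1 ≤ f ω) : (μ {ω | f ω ≠ 0}).toReal ≤ ∫ ω, f ω ∂μ := by
  have hnonneg : 0 ≤ᵐ[μ] f := h.mono fun ω hω => by
    by_cases h0 : f ω = 0
    · exact h0.ge
    · exact zero_le_one.trans (hω h0)
  calc (μ {ω | f ω ≠ 0}).toReal ≤ μ.real {ω | 1 ≤ f ω} :=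
        ENNReal.toReal_mono (measure_ne_top _ _) (measure_mono_ae h)
    _ ≤ ∫ ω, f ω ∂μ := by
        simpa only [one_mul] using mul_meas_ge_le_integral_of_nonneg hnonneg hf 1

end Probability

open PointConfiguration in
/-- Let `N` and `N̄` be point processes coinciding on `(-∞,0]` whose last
point before `0` satisfies `-T₀ ≤ M₀` a.s. Then for every `θ > 0`,
`E[sup_{t∈[0,θ]} |S_{t-} − S̄_{t-}|] ≤ (M₀+θ) P(sup_{t∈[0,θ]} |N_t − N̄_t| ≠ 0)
≤ (M₀+θ) E[sup_{t∈[0,θ]} |N_t − N̄_t|]`. -/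
theorem stmt17 {Ω : Type*} [MeasurableSpace Ω] (P : Measure Ω) [IsProbabilityMeasure P]
    (N N' : Ω → Set ℝ) (M₀ : ℝ) (hM₀ : 0 ≤ M₀)
    (hfin : ∀ ω, ∀ a b : ℝ, ((N ω) ∩ Icc a b).Finite ∧ ((N' ω) ∩ Icc a b).Finite)
    (hpast : ∀ ω, (N ω) ∩ Iic 0 = (N' ω) ∩ Iic 0)
    (hT₀ : ∀ᵐ ω ∂P, ∃ T ∈ N ω, T ≤ 0 ∧ -T ≤ M₀)
    (hintAge : ∀ θ > (0:ℝ), Integrable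
      (fun ω => ⨆ t : Icc (0:ℝ) θ, |predAge (N ω) t - predAge (N' ω) t|) P)
    (hintCount : ∀ θ > (0:ℝ), Integrable
      (fun ω => ⨆ t : Icc (0:ℝ) θ, |countProc (N ω) t - countProc (N' ω) t|) P) :
    ∀ θ > (0:ℝ),
      (∫ ω, (⨆ t : Icc (0:ℝ) θ, |predAge (N ω) t - predAge (N' ω) t|) ∂P
          ≤ (M₀ + θ) *
            (P {ω | (⨆ t : Icc (0:ℝ) θ,
              |countProc (N ω) t - countProc (N' ω) t|) ≠ 0}).toReal) ∧
      (M₀ + θ) *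
          (P {ω | (⨆ t : Icc (0:ℝ) θ,
            |countProc (N ω) t - countProc (N' ω) t|) ≠ 0}).toReal
        ≤ (M₀ + θ) *
          ∫ ω, (⨆ t : Icc (0:ℝ) θ, |countProc (N ω) t - countProc (N' ω) t|) ∂P := by
  intro θ hθ
  have hfinN : ∀ ω, (N ω ∩ Ioc 0 θ).Finite := fun ω =>
    (hfin ω 0 θ).1.subset (inter_subset_inter_right _ Ioc_subset_Icc_self)
  have hfinN' : ∀ ω, (N' ω ∩ Ioc 0 θ).Finite := fun ω =>
    (hfin ω 0 θ).2.subset (inter_subset_inter_right _ Ioc_subset_Icc_self)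
  constructor
  · refine integral_le_mul_measure_ne_zero (hintAge θ hθ) (hintCount θ hθ).aestronglyMeasurable
      (hT₀.mono fun ω ⟨T, hTN, hT0, hTM⟩ => ?_)
      (ae_of_all _ fun ω h => (iSup_abs_predAge_sub_eq_zero (hfinN ω) (hfinN' ω) (hpast ω) hθ.le h).le)
    exact (iSup_abs_predAge_sub_le (hpast ω) hTN hT0 hθ.le).trans (by linarith)
  · exact mul_le_mul_of_nonneg_left (measure_ne_zero_toReal_le_integral (hintCount θ hθ)
      (ae_of_all _ fun ω => one_le_iSup_abs_countProc_sub (hfinN ω) (hfinN' ω))) (by linarith)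
end

section
/- Let θ > 0, M > 0, and for each n let S^{n,1},…,S^{n,n} and S̄¹,…,S̄ⁿ be random variables in [0,M] with E[|S^{n,i} − S̄^i|] ≤ C n^{−1/2} for all i, where S̄¹,…,S̄ⁿ are i.i.d. with common law u having a density on [0,M]. Then E[W₁((1/n)∑_{i=1}^n δ_{S^{n,i}}, u)] ≤ (C + C̃(M)) n^{−1/2}, where W₁ is the 1-Wasserstein distance and C̃(M) depends only on M. -/
open MeasureTheory ProbabilityTheory Set

/-- The 1-Wasserstein distance
`W₁(μ,ν) = inf { E[|X−Y|] : (X,Y) coupling of (μ,ν) }`. -/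
noncomputable def W1 (μ ν : Measure ℝ) : ℝ :=
  sInf {r | ∃ π : Measure (ℝ × ℝ), IsProbabilityMeasure π ∧
    π.map Prod.fst = μ ∧ π.map Prod.snd = ν ∧ r = ∫ p, |p.1 - p.2| ∂π}

/-- The empirical measure `n⁻¹ ∑_{i} δ_{x i}`. -/
noncomputable def empMeasure (n : ℕ) (x : Fin n → ℝ) : Measure ℝ :=
  (n : ENNReal)⁻¹ • ∑ i : Fin n, Measure.dirac (x i)

/-!
For laws `μ, ν` on `[a, b]`, coupling them through their quantile functions on `(0, 1)` and
using `|x - y| = ∫ |1{x ≤ s} - 1{y ≤ s}| ds` together with the Galois connection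
`quantile μ t ≤ x ↔ t ≤ F_μ x` gives `W₁(μ, ν) ≤ ∫_a^b |F_μ - F_ν|`. Comparing the empirical
distribution functions of `S` and `S̄` pointwise then bounds `W₁(μ_S, u)` by
`n⁻¹ ∑ |Sⁱ - S̄ⁱ| + ∫_0^M |F_{μ_S̄} - F_u|`. The first term has expectation at most `C n^{-1/2}`.
For fixed `s`, `n F_{μ_S̄}(s)` is a sum of `n` independent Bernoulli variables with mean
`p = F_u(s)`, so `E |F_{μ_S̄}(s) - p| ≤ √(p (1 - p) / n) ≤ 1 / (2√n)`; integrating over `[0, M]`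
gives `C̃(M) = M / 2`.
-/

section Quantile

open Filter

/-- Meaningful only for `t ∈ (0, 1)`; otherwise the set may be empty or unbounded below. -/
noncomputable def quantile (μ : Measure ℝ) (t : ℝ) : ℝ := sInf {x | t ≤ cdf μ x}

variable {μ : Measure ℝ} {t : ℝ}

lemma nonempty_setOf_le_cdf (ht : t < 1) : {x | t ≤ cdf μ x}.Nonempty :=
  (((tendsto_cdf_atTop μ).eventually (lt_mem_nhds ht)).exists).imp fun _ hx ↦ hx.le

lemma bddBelow_setOf_le_cdf (ht : 0 < t) : BddBelow {x | t ≤ cdf μ x} := by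
  obtain ⟨x₀, hx₀⟩ := eventually_atBot.1 ((tendsto_cdf_atBot μ).eventually (gt_mem_nhds ht))
  exact ⟨x₀, fun x hx ↦ le_of_not_ge fun hxx₀ ↦ (hx₀ x hxx₀).not_ge hx⟩

lemma le_cdf_quantile (ht : t ∈ Ioo 0 1) : t ≤ cdf μ (quantile μ t) := by
  refine ge_of_tendsto (((cdf μ).right_continuous _).mono Ioi_subset_Ici_self)
    (eventually_nhdsWithin_of_forall fun y hy ↦ ?_)
  obtain ⟨z, hz, hzy⟩ := exists_lt_of_csInf_lt (nonempty_setOf_le_cdf ht.2) hy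
  exact hz.trans (monotone_cdf μ hzy.le)

lemma quantile_le_iff (ht : t ∈ Ioo 0 1) {x : ℝ} : quantile μ t ≤ x ↔ t ≤ cdf μ x :=
  ⟨fun h ↦ (le_cdf_quantile ht).trans (monotone_cdf μ h),
    fun h ↦ csInf_le (bddBelow_setOf_le_cdf ht.1) h⟩

lemma monotoneOn_quantile : MonotoneOn (quantile μ) (Ioo 0 1) := fun _ hs _ ht hst ↦
  (quantile_le_iff hs).2 (hst.trans (le_cdf_quantile ht))

instance : IsProbabilityMeasure (volume.restrict (Ioo (0 : ℝ) 1)) := ⟨by simp⟩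

lemma aemeasurable_quantile : AEMeasurable (quantile μ) (volume.restrict (Ioo 0 1)) :=
  aemeasurable_restrict_of_monotoneOn measurableSet_Ioo monotoneOn_quantile

lemma map_quantile [IsProbabilityMeasure μ] :
    (volume.restrict (Ioo 0 1)).map (quantile μ) = μ := by
  have hQ := aemeasurable_quantile (μ := μ)
  have := Measure.isProbabilityMeasure_map hQ
  refine Measure.ext_of_Iic _ _ fun x ↦ ?_
  have hpre : quantile μ ⁻¹' Iic x ∩ Ioo 0 1 = Iic (cdf μ x) ∩ Ioo 0 1 := by
    ext t
    exact ⟨fun ⟨h, ht⟩ ↦ ⟨(quantile_le_iff ht).1 h, ht⟩,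
      fun ⟨h, ht⟩ ↦ ⟨(quantile_le_iff ht).2 h, ht⟩⟩
  rw [Measure.map_apply_of_aemeasurable hQ measurableSet_Iic,
    Measure.restrict_apply' measurableSet_Ioo, hpre, ← Measure.restrict_apply measurableSet_Iic,
    Measure.restrict_congr_set Ioo_ae_eq_Ioc, Measure.restrict_apply measurableSet_Iic,
    Iic_inter_Ioc_of_le (cdf_le_one μ x), Real.volume_Ioc, sub_zero, ofReal_cdf]

lemma quantile_mem_Icc {a b : ℝ} [IsProbabilityMeasure μ] (hμ : μ (Icc a b) = 1)
    (ht : t ∈ Ioo 0 1) : quantile μ t ∈ Icc a b := by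
  refine ⟨le_of_not_gt fun hlt ↦ ?_, (quantile_le_iff ht).2 ?_⟩
  · have hnull : μ (Icc a b)ᶜ = 0 := (prob_compl_eq_zero_iff measurableSet_Icc).2 hμ
    have : μ (Iic (quantile μ t)) = 0 :=
      measure_mono_null (fun x hx (hx' : x ∈ Icc a b) ↦ (hx'.1.trans hx).not_gt hlt) hnull
    have hle := le_cdf_quantile (μ := μ) ht
    rw [cdf_eq_real, measureReal_def, this, ENNReal.toReal_zero] at hle
    exact hle.not_gt ht.1
  · calc t ≤ 1 := ht.2.le
      _ = μ.real (Icc a b) := by simp [measureReal_def, hμ]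
      _ ≤ cdf μ b := (cdf_eq_real μ b).symm ▸ measureReal_mono (fun x hx ↦ hx.2)

end Quantile

lemma W1_le_integral_abs_quantile_sub (μ ν : Measure ℝ) [IsProbabilityMeasure μ]
    [IsProbabilityMeasure ν] : W1 μ ν ≤ ∫ t in Ioo 0 1, |quantile μ t - quantile ν t| := by
  have hQ : AEMeasurable (fun t ↦ (quantile μ t, quantile ν t)) (volume.restrict (Ioo 0 1)) :=
    aemeasurable_quantile.prodMk aemeasurable_quantile
  refine csInf_le ⟨0, ?_⟩ ⟨_, Measure.isProbabilityMeasure_map hQ, ?_, ?_, ?_⟩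
  · rintro r ⟨π, -, -, -, rfl⟩
    exact integral_nonneg fun _ ↦ abs_nonneg _
  · rw [AEMeasurable.map_map_of_aemeasurable measurable_fst.aemeasurable hQ]
    exact map_quantile
  · rw [AEMeasurable.map_map_of_aemeasurable measurable_snd.aemeasurable hQ]
    exact map_quantile
  · have hcost : Continuous fun p : ℝ × ℝ ↦ |p.1 - p.2| := by fun_prop
    exact (integral_map hQ hcost.aestronglyMeasurable).symm

open scoped symmDiff

lemma Set.Ici_symmDiff_Ici {α : Type*} [LinearOrder α] (a b : α) :
    Ici a ∆ Ici b = Ico (min a b) (max a b) := by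
  ext x
  simp only [mem_symmDiff, mem_Ici, mem_Ico, min_le_iff, lt_max_iff]
  grind

lemma Set.Iic_symmDiff_Iic {α : Type*} [LinearOrder α] (a b : α) : Iic a ∆ Iic b = uIoc a b := by
  ext x
  simp only [mem_symmDiff, mem_Iic, uIoc, mem_Ioc, min_lt_iff, le_max_iff]
  grind

lemma integral_abs_indicator_sub_indicator {α : Type*} [MeasurableSpace α] (μ : Measure α)
    {s t : Set α} (hs : MeasurableSet s) (ht : MeasurableSet t) :
    ∫ x, |s.indicator 1 x - t.indicator 1 x| ∂μ = μ.real (s ∆ t) := by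
  rw [← integral_indicator_one (hs.symmDiff ht)]
  refine integral_congr_ae (ae_of_all _ fun x ↦ ?_)
  dsimp only
  rw [← abs_indicator_symmDiff s t 1 x]
  exact abs_of_nonneg (indicator_nonneg (fun _ _ ↦ zero_le_one) x)

lemma setIntegral_abs_indicator_Ici_sub {a b x y : ℝ} (hx : x ∈ Icc a b) (hy : y ∈ Icc a b) :
    ∫ s in Icc a b, |(Ici x).indicator 1 s - (Ici y).indicator 1 s| = |x - y| := by
  rw [integral_abs_indicator_sub_indicator _ measurableSet_Ici measurableSet_Ici, Ici_symmDiff_Ici,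
    measureReal_restrict_apply measurableSet_Ico, inter_eq_left.2,
    Real.volume_real_Ico_of_le min_le_max, max_sub_min_eq_abs']
  exact Ico_subset_Icc_self.trans (Icc_subset_Icc (le_min hx.1 hy.1) (max_le hx.2 hy.2))

lemma setIntegral_abs_indicator_Iic_sub {p q : ℝ} (hp : p ∈ Icc 0 1) (hq : q ∈ Icc 0 1) :
    ∫ t in Ioo 0 1, |(Iic p).indicator 1 t - (Iic q).indicator 1 t| = |p - q| := by
  rw [integral_abs_indicator_sub_indicator _ measurableSet_Iic measurableSet_Iic, Iic_symmDiff_Iic,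
    Measure.restrict_congr_set Ioo_ae_eq_Ioc, measureReal_restrict_apply measurableSet_uIoc,
    inter_eq_left.2, measureReal_def, Real.volume_uIoc, ENNReal.toReal_ofReal (abs_nonneg _),
    abs_sub_comm]
  exact Ioc_subset_Ioc (le_min hp.1 hq.1) (max_le hp.2 hq.2)

lemma abs_indicator_one_sub_indicator_one_le {α : Type*} (s t : Set α) (x : α) :
    |s.indicator (1 : α → ℝ) x - t.indicator 1 x| ≤ 1 := by
  rw [← abs_indicator_symmDiff]
  by_cases hx : x ∈ s ∆ t <;> simp [hx]

lemma measurable_indicator_Iic_cdf (ρ : Measure ℝ) :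
    Measurable fun p : ℝ × ℝ ↦ (Iic (cdf ρ p.2)).indicator (1 : ℝ → ℝ) p.1 :=
  measurable_const.indicator
    (measurableSet_le measurable_fst ((cdf ρ).mono.measurable.comp measurable_snd))

lemma setIntegral_abs_quantile_sub_eq {μ ν : Measure ℝ} [IsProbabilityMeasure μ]
    [IsProbabilityMeasure ν] {a b : ℝ} (hμ : μ (Icc a b) = 1) (hν : ν (Icc a b) = 1) :
    ∫ t in Ioo 0 1, |quantile μ t - quantile ν t| = ∫ s in Icc a b, |cdf μ s - cdf ν s| := by
  calc ∫ t in Ioo 0 1, |quantile μ t - quantile ν t|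
      = ∫ t in Ioo 0 1, ∫ s in Icc a b,
          |(Iic (cdf μ s)).indicator 1 t - (Iic (cdf ν s)).indicator 1 t| := by
        refine setIntegral_congr_fun measurableSet_Ioo fun t ht ↦ ?_
        rw [← setIntegral_abs_indicator_Ici_sub (quantile_mem_Icc hμ ht) (quantile_mem_Icc hν ht)]
        simp only [indicator, mem_Ici, mem_Iic, quantile_le_iff ht, Pi.one_apply]
    _ = ∫ s in Icc a b, ∫ t in Ioo 0 1,
          |(Iic (cdf μ s)).indicator 1 t - (Iic (cdf ν s)).indicator 1 t| :=
        integral_integral_swap <| Integrable.of_mem_Icc 0 1 (by exact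
          ((measurable_indicator_Iic_cdf μ).sub (measurable_indicator_Iic_cdf ν)).abs.aemeasurable)
          (ae_of_all _ fun _ ↦ ⟨abs_nonneg _, abs_indicator_one_sub_indicator_one_le _ _ _⟩)
    _ = ∫ s in Icc a b, |cdf μ s - cdf ν s| :=
        setIntegral_congr_fun measurableSet_Icc fun s _ ↦ setIntegral_abs_indicator_Iic_sub
          ⟨cdf_nonneg μ s, cdf_le_one μ s⟩ ⟨cdf_nonneg ν s, cdf_le_one ν s⟩

lemma W1_le_integral_abs_cdf_sub {μ ν : Measure ℝ} [IsProbabilityMeasure μ]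
    [IsProbabilityMeasure ν] {a b : ℝ} (hμ : μ (Icc a b) = 1) (hν : ν (Icc a b) = 1) :
    W1 μ ν ≤ ∫ s in Icc a b, |cdf μ s - cdf ν s| :=
  setIntegral_abs_quantile_sub_eq hμ hν ▸ W1_le_integral_abs_quantile_sub μ ν

lemma abs_cdf_sub_cdf_le_one (μ ν : Measure ℝ) (s : ℝ) : |cdf μ s - cdf ν s| ≤ 1 :=
  (abs_sub_le_of_le_of_le (cdf_nonneg μ s) (cdf_le_one μ s) (cdf_nonneg ν s)
    (cdf_le_one ν s)).trans_eq (sub_zero 1)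

lemma integrableOn_abs_cdf_sub_cdf (μ ν : Measure ℝ) (a b : ℝ) :
    IntegrableOn (fun s ↦ |cdf μ s - cdf ν s|) (Icc a b) :=
  Integrable.of_mem_Icc 0 1
    ((cdf μ).mono.measurable.sub (cdf ν).mono.measurable).abs.aemeasurable
    (ae_of_all _ fun s ↦ ⟨abs_nonneg _, abs_cdf_sub_cdf_le_one μ ν s⟩)

section Concentration

variable {Ω : Type*} [MeasurableSpace Ω] {P : Measure Ω} [IsProbabilityMeasure P]

lemma integral_abs_sub_integral_le_sqrt_variance {X : Ω → ℝ} (hX : MemLp X 2 P) :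
    ∫ ω, |X ω - P[X]| ∂P ≤ √Var[X; P] := by
  have hY : MemLp (fun ω ↦ |X ω - P[X]|) 2 P := (hX.sub (memLp_const _)).norm
  have hvar := variance_nonneg (fun ω ↦ |X ω - P[X]|) P
  rw [variance_eq_sub hY] at hvar
  simp only [Pi.pow_apply, sq_abs] at hvar
  rw [← variance_eq_integral hX.aemeasurable] at hvar
  exact Real.le_sqrt_of_sq_le (by linarith)

lemma integral_abs_average_sub_le {ι : Type*} [Fintype ι] [Nonempty ι] {X : ι → Ω → ℝ}
    (hX : ∀ i, MemLp (X i) 2 P) (hindep : iIndepFun X P) {m v : ℝ} (hm : ∀ i, P[X i] = m)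
    (hv : ∀ i, Var[X i; P] ≤ v) :
    ∫ ω, |(Fintype.card ι : ℝ)⁻¹ * ∑ i, X i ω - m| ∂P ≤ √(v / Fintype.card ι) := by
  set n := (Fintype.card ι : ℝ)
  have hn : 0 < n := Nat.cast_pos.2 Fintype.card_pos
  have hsum : MemLp (∑ i, X i) 2 P := memLp_finsetSum' _ fun i _ ↦ hX i
  have hmean : P[∑ i, X i] = n * m := by
    simp [integral_finsetSum _ fun i _ ↦ (hX i).integrable one_le_two, hm, n]
  have hvar : Var[∑ i, X i; P] ≤ n * v := by
    rw [IndepFun.variance_sum (fun i _ ↦ hX i) fun i _ j _ hij ↦ hindep.indepFun hij]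
    simpa [n] using Finset.sum_le_sum fun i (_ : i ∈ Finset.univ) ↦ hv i
  have hpt (ω : Ω) : |n⁻¹ * ∑ i, X i ω - m| = n⁻¹ * |(∑ i, X i) ω - P[∑ i, X i]| := by
    have : n⁻¹ * ∑ i, X i ω - m = n⁻¹ * ((∑ i, X i) ω - n * m) := by
      rw [Finset.sum_apply]
      field_simp
    rw [hmean, this, abs_mul, abs_of_pos (inv_pos.2 hn)]
  calc ∫ ω, |n⁻¹ * ∑ i, X i ω - m| ∂P
      = n⁻¹ * ∫ ω, |(∑ i, X i) ω - P[∑ i, X i]| ∂P := by simp_rw [hpt]; exact integral_const_mul _ _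
    _ ≤ n⁻¹ * √(n * v) := by
        gcongr
        exact (integral_abs_sub_integral_le_sqrt_variance hsum).trans (Real.sqrt_le_sqrt hvar)
    _ = √(v / n) := by
        have := Real.sqrt_pos.2 hn
        rw [Real.sqrt_div' _ hn.le, Real.sqrt_mul hn.le]
        field_simp
        rw [Real.sq_sqrt hn.le]

end Concentration

section Empirical

variable {n : ℕ}

lemma empMeasure_apply (x : Fin n → ℝ) (s : Set ℝ) :
    empMeasure n x s = (n : ENNReal)⁻¹ * ∑ i, Measure.dirac (x i) s := by
  simp [empMeasure]

variable [NeZero n]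

lemma empMeasure_eq_one_of_forall_mem {x : Fin n → ℝ} {s : Set ℝ}
    (hx : ∀ i, x i ∈ s) : empMeasure n x s = 1 := by
  simp only [empMeasure_apply, Measure.dirac_apply_of_mem (hx _), Finset.sum_const,
    Finset.card_univ, Fintype.card_fin, nsmul_eq_mul, mul_one]
  exact ENNReal.inv_mul_cancel (NeZero.ne _) (ENNReal.natCast_ne_top n)

instance (x : Fin n → ℝ) : IsProbabilityMeasure (empMeasure n x) :=
  ⟨empMeasure_eq_one_of_forall_mem fun _ ↦ mem_univ _⟩

lemma cdf_empMeasure (x : Fin n → ℝ) (s : ℝ) :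
    cdf (empMeasure n x) s = (n : ℝ)⁻¹ * ∑ i, (Iic s).indicator 1 (x i) := by
  simp [cdf_eq_real, measureReal_def, empMeasure_apply, Measure.dirac_apply' _ measurableSet_Iic,
    indicator]

lemma setIntegral_abs_cdf_empMeasure_sub_le {a b : ℝ} {x y : Fin n → ℝ}
    (hx : ∀ i, x i ∈ Icc a b) (hy : ∀ i, y i ∈ Icc a b) :
    ∫ s in Icc a b, |cdf (empMeasure n x) s - cdf (empMeasure n y) s|
      ≤ (n : ℝ)⁻¹ * ∑ i, |x i - y i| := by
  have hind (z s : ℝ) : (Iic s).indicator (1 : ℝ → ℝ) z = (Ici z).indicator 1 s := by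
    simp [indicator]
  have hint (i : Fin n) : IntegrableOn
      (fun s ↦ |(Ici (x i)).indicator (1 : ℝ → ℝ) s - (Ici (y i)).indicator 1 s|) (Icc a b) :=
    Integrable.of_mem_Icc 0 1 ((measurable_const.indicator measurableSet_Ici).sub
      (measurable_const.indicator measurableSet_Ici)).abs.aemeasurable
      (ae_of_all _ fun _ ↦ ⟨abs_nonneg _, abs_indicator_one_sub_indicator_one_le _ _ _⟩)
  calc ∫ s in Icc a b, |cdf (empMeasure n x) s - cdf (empMeasure n y) s|
      ≤ ∫ s in Icc a b,
          (n : ℝ)⁻¹ * ∑ i, |(Ici (x i)).indicator 1 s - (Ici (y i)).indicator 1 s| := by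
        refine integral_mono_of_nonneg (ae_of_all _ fun _ ↦ abs_nonneg _)
          ((integrable_finsetSum _ fun i _ ↦ hint i).const_mul _) (ae_of_all _ fun s ↦ ?_)
        simp only [cdf_empMeasure, hind, ← mul_sub, ← Finset.sum_sub_distrib, abs_mul, abs_inv,
          Nat.abs_cast]
        gcongr
        exact Finset.abs_sum_le_sum_abs _ _
    _ = (n : ℝ)⁻¹ * ∑ i, |x i - y i| := by
        rw [integral_const_mul, integral_finsetSum _ fun i _ ↦ hint i]
        simp only [setIntegral_abs_indicator_Ici_sub (hx _) (hy _)]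

lemma W1_empMeasure_le {a b : ℝ} {x y : Fin n → ℝ} (hx : ∀ i, x i ∈ Icc a b)
    (hy : ∀ i, y i ∈ Icc a b) {μ : Measure ℝ} [IsProbabilityMeasure μ] (hμ : μ (Icc a b) = 1) :
    W1 (empMeasure n x) μ
      ≤ (n : ℝ)⁻¹ * ∑ i, |x i - y i| + ∫ s in Icc a b, |cdf (empMeasure n y) s - cdf μ s| := by
  have hint := integrableOn_abs_cdf_sub_cdf (a := a) (b := b)
  calc W1 (empMeasure n x) μ ≤ ∫ s in Icc a b, |cdf (empMeasure n x) s - cdf μ s| :=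
        W1_le_integral_abs_cdf_sub (empMeasure_eq_one_of_forall_mem hx) hμ
    _ ≤ ∫ s in Icc a b, (|cdf (empMeasure n x) s - cdf (empMeasure n y) s|
          + |cdf (empMeasure n y) s - cdf μ s|) :=
        integral_mono (hint _ _) ((hint _ _).add (hint _ _)) fun s ↦ abs_sub_le _ _ _
    _ = (∫ s in Icc a b, |cdf (empMeasure n x) s - cdf (empMeasure n y) s|)
          + ∫ s in Icc a b, |cdf (empMeasure n y) s - cdf μ s| :=
        integral_add (hint _ _) (hint _ _)
    _ ≤ _ := by grw [setIntegral_abs_cdf_empMeasure_sub_le hx hy]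

variable {Ω : Type*} [MeasurableSpace Ω] {P : Measure Ω} {X : Fin n → Ω → ℝ}

lemma integral_average_le (hX : ∀ i, Integrable (X i) P) {c : ℝ} (hc : ∀ i, ∫ ω, X i ω ∂P ≤ c) :
    ∫ ω, (n : ℝ)⁻¹ * ∑ i, X i ω ∂P ≤ c := by
  rw [integral_const_mul, integral_finsetSum _ fun i _ ↦ hX i]
  calc (n : ℝ)⁻¹ * ∑ i, ∫ ω, X i ω ∂P ≤ (n : ℝ)⁻¹ * ∑ _i : Fin n, c := by gcongr with i; exact hc i
    _ = c := by simp [NeZero.ne n]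

lemma measurable_cdf_empMeasure (hX : ∀ i, Measurable (X i)) :
    Measurable fun p : Ω × ℝ ↦ cdf (empMeasure n fun i ↦ X i p.1) p.2 := by
  simp_rw [cdf_empMeasure]
  exact measurable_const.mul (Finset.measurable_sum _ fun i _ ↦ measurable_const.indicator
    (measurableSet_le ((hX i).comp measurable_fst) measurable_snd))

variable [IsProbabilityMeasure P]

lemma integrable_abs_cdf_empMeasure_sub_cdf (hX : ∀ i, Measurable (X i)) (μ : Measure ℝ)
    (a b : ℝ) : Integrable (fun p : Ω × ℝ ↦ |cdf (empMeasure n fun i ↦ X i p.1) p.2 - cdf μ p.2|)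
      (P.prod (volume.restrict (Icc a b))) :=
  Integrable.of_mem_Icc 0 1 ((measurable_cdf_empMeasure hX).sub
      ((cdf μ).mono.measurable.comp measurable_snd)).abs.aemeasurable
    (ae_of_all _ fun _ ↦ ⟨abs_nonneg _, abs_cdf_sub_cdf_le_one _ _ _⟩)

lemma integral_abs_cdf_empMeasure_sub_cdf_le (hX : ∀ i, Measurable (X i)) (hindep : iIndepFun X P)
    {μ : Measure ℝ} [IsProbabilityMeasure μ] (hlaw : ∀ i, P.map (X i) = μ) (s : ℝ) :
    ∫ ω, |cdf (empMeasure n fun i ↦ X i ω) s - cdf μ s| ∂P ≤ (2 * √n)⁻¹ := by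
  have hf : Measurable ((Iic s).indicator (1 : ℝ → ℝ)) :=
    measurable_const.indicator measurableSet_Iic
  have hmem (i : Fin n) : ∀ᵐ ω ∂P, ((Iic s).indicator 1 ∘ X i) ω ∈ Icc (0 : ℝ) 1 :=
    ae_of_all _ fun ω ↦ by by_cases h : X i ω ≤ s <;> simp [indicator, h]
  have hmean (i : Fin n) : P[(Iic s).indicator 1 ∘ X i] = cdf μ s := by
    simp only [Function.comp_apply]
    rw [← integral_map (hX i).aemeasurable hf.aestronglyMeasurable, hlaw i,
      integral_indicator_one measurableSet_Iic, cdf_eq_real]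
  have key := integral_abs_average_sub_le
    (fun i ↦ memLp_of_bounded (hmem i) (hf.comp (hX i)).aestronglyMeasurable 2)
    (hindep.comp _ fun _ ↦ hf) hmean
    (fun i ↦ variance_le_sq_of_bounded (hmem i) (hf.comp (hX i)).aemeasurable)
  simp only [Fintype.card_fin, Function.comp_apply] at key
  simp_rw [cdf_empMeasure]
  refine key.trans_eq ?_
  rw [Real.sqrt_div' _ n.cast_nonneg, Real.sqrt_sq (by norm_num)]
  ring

lemma integral_integral_abs_cdf_empMeasure_sub_cdf_le (hX : ∀ i, Measurable (X i))
    (hindep : iIndepFun X P) {μ : Measure ℝ} [IsProbabilityMeasure μ]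
    (hlaw : ∀ i, P.map (X i) = μ) {a b : ℝ} (hab : a ≤ b) :
    ∫ ω, (∫ s in Icc a b, |cdf (empMeasure n fun i ↦ X i ω) s - cdf μ s|) ∂P
      ≤ (b - a) * (2 * √n)⁻¹ := by
  have hint := integrable_abs_cdf_empMeasure_sub_cdf (P := P) hX μ a b
  rw [integral_integral_swap hint]
  calc ∫ s in Icc a b, ∫ ω, |cdf (empMeasure n fun i ↦ X i ω) s - cdf μ s| ∂P
      ≤ ∫ s in Icc a b, (2 * √n)⁻¹ :=
        integral_mono hint.integral_prod_right (integrable_const _)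
          (integral_abs_cdf_empMeasure_sub_cdf_le hX hindep hlaw)
    _ = (b - a) * (2 * √n)⁻¹ := by simp [Real.volume_real_Icc_of_le hab]

end Empirical

/-- Let `θ > 0`, `M > 0`. There is a constant `C̃` depending only on `M`
such that: whenever `S^{n,1},…,S^{n,n}` and i.i.d. `S̄¹,…,S̄ⁿ` take values in `[0,M]`, the
common law `u` of the `S̄ⁱ` has a density, and `E[|S^{n,i} − S̄^i|] ≤ C n^{-1/2}` for all
`i`, then `E[W₁(n⁻¹ ∑ δ_{S^{n,i}}, u)] ≤ (C + C̃) n^{-1/2}`. -/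
theorem stmt19 (M : ℝ) (hM : 0 < M) :
    ∃ Ct : ℝ, ∀ (Ω : Type) (_ : MeasurableSpace Ω) (P : Measure Ω),
      IsProbabilityMeasure P →
      ∀ (n : ℕ), 0 < n → ∀ (S Sb : Fin n → Ω → ℝ) (C : ℝ), 0 ≤ C →
        ∀ (uLaw : Measure ℝ), IsProbabilityMeasure uLaw → uLaw ≪ volume →
        (∀ i, Measurable (S i)) → (∀ i, Measurable (Sb i)) →
        (∀ i ω, S i ω ∈ Icc 0 M) → (∀ i ω, Sb i ω ∈ Icc 0 M) →
        iIndepFun Sb P →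
        (∀ i, P.map (Sb i) = uLaw) →
        (∀ i, ∫ ω, |S i ω - Sb i ω| ∂P ≤ C * (Real.sqrt n)⁻¹) →
        Integrable (fun ω => W1 (empMeasure n (fun i => S i ω)) uLaw) P →
        ∫ ω, W1 (empMeasure n (fun i => S i ω)) uLaw ∂P
          ≤ (C + Ct) * (Real.sqrt n)⁻¹ := by
  refine ⟨M / 2, fun Ω _ P _ n hn S Sb C _ uLaw _ _ hS hSb hSM hSbM hindep hlaw hL1 hW ↦ ?_⟩
  have : NeZero n := ⟨hn.ne'⟩
  have hu : uLaw (Icc 0 M) = 1 := by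
    rw [← hlaw ⟨0, hn⟩, Measure.map_apply (hSb _) measurableSet_Icc,
      preimage_eq_univ_iff.2 (range_subset_iff.2 (hSbM _)), measure_univ]
  have hbdd {X : Fin n → Ω → ℝ} (hX : ∀ i, Measurable (X i)) (hXM : ∀ i ω, X i ω ∈ Icc 0 M)
      (i : Fin n) : Integrable (X i) P :=
    Integrable.of_mem_Icc 0 M (hX i).aemeasurable (ae_of_all _ (hXM i))
  have hdiff (i : Fin n) : Integrable (fun ω ↦ |S i ω - Sb i ω|) P :=
    ((hbdd hS hSM i).sub (hbdd hSb hSbM i)).abs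
  have hA := (integrable_finsetSum Finset.univ fun i _ ↦ hdiff i).const_mul (n : ℝ)⁻¹
  have hB := (integrable_abs_cdf_empMeasure_sub_cdf (P := P) hSb uLaw 0 M).integral_prod_left
  calc ∫ ω, W1 (empMeasure n fun i ↦ S i ω) uLaw ∂P
      ≤ ∫ ω, ((n : ℝ)⁻¹ * ∑ i, |S i ω - Sb i ω|
          + ∫ s in Icc 0 M, |cdf (empMeasure n fun i ↦ Sb i ω) s - cdf uLaw s|) ∂P :=
        integral_mono hW (hA.add hB) fun ω ↦ W1_empMeasure_le (hSM · ω) (hSbM · ω) hu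
    _ = ∫ ω, (n : ℝ)⁻¹ * ∑ i, |S i ω - Sb i ω| ∂P
          + ∫ ω, (∫ s in Icc 0 M, |cdf (empMeasure n fun i ↦ Sb i ω) s - cdf uLaw s|) ∂P :=
        integral_add hA hB
    _ ≤ C * (√n)⁻¹ + (M - 0) * (2 * √n)⁻¹ :=
        add_le_add (integral_average_le hdiff hL1)
          (integral_integral_abs_cdf_empMeasure_sub_cdf_le hSb hindep hlaw hM.le)
    _ = (C + M / 2) * (√n)⁻¹ := by ring
end
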